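/- Block encoding of the two-dimensional discrete gradient: on ℂ² ⊗ ℂ² ⊗ ℂ^{N²} (qubits ordered ℓ, k, then the system register indexed by Fin N × Fin N with components (j⁽¹⁾, j⁽⁰⁾)) define C₀ = P₀ ⊗ P₀ ⊗ (I_N ⊗ S₋) + (I₄ − P₀ ⊗ P₀) ⊗ I_{N²}, C₁ = P₁ ⊗ P₀ ⊗ (I_N ⊗ S₊) + (I₄ − P₁ ⊗ P₀) ⊗ I_{N²}, C₂ = P₀ ⊗ P₁ ⊗ (S₋ ⊗ I_N) + (I₄ − P₀ ⊗ P₁) ⊗ I_{N²}, C₃ = P₁ ⊗ P₁ ⊗ (S₊ ⊗ I_N) + (I₄ − P₁ ⊗ P₁) ⊗ I_{N²}, and U = (H ⊗ I₂ ⊗ I_{N²}) · C₃ · C₂ · C₁ · C₀ · ((Z·H) ⊗ H ⊗ I_{N²}). Then U block-encodes the discrete gradient with sub-normalization factor 1/√2: for each a ∈ Fin 2 and all r, c ∈ Fin N × Fin N, U((0,a,r),(0,0,c)) = (1/√2)·(D̃⁽ᵃ⁾)_{rc}, where D̃⁽⁰⁾ = I_N ⊗ D̃₁, D̃⁽¹⁾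 = D̃₁ ⊗ I_N, and D̃₁ = (1/2)(S₋ − S₊). -/

import Mathlib

/-!
`C₀, …, C₃` are shifts controlled by the four rank-one projectors `|ℓk⟩⟨ℓk|`. These are mutually
orthogonal and sum to the identity, so the product `C₃C₂C₁C₀` is the select operator
`∑ |ℓk⟩⟨ℓk| ⊗ V_{ℓk}`, where `V_{ℓk}` is `S₋` (`ℓ = 0`) or `S₊` (`ℓ = 1`) acting on the `k`-th axis.
Between the outer Hadamard layers, the block `⟨0a|U|00⟩` keeps the terms with `k = a`, weighted by
`⟨0|H|ℓ⟩⟨ℓ|ZH|0⟩ = ±1/2` and `⟨a|H|0⟩ = 1/√2`, which gives `(1/√2)·(1/2)(V_{0a} − V_{1a})`.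
-/

open Matrix Kronecker

noncomputable section

/-- Cyclic shift matrix `S₊`: `(S₊)_{jk} = 1` iff `j ≡ k+1 (mod N)`. -/
def Sp (N : ℕ) [NeZero N] : Matrix (Fin N) (Fin N) ℂ :=
  Matrix.of fun j k => if j = k + 1 then 1 else 0

/-- Cyclic shift matrix `S₋ = S₊ᵀ`. -/
def Sm (N : ℕ) [NeZero N] : Matrix (Fin N) (Fin N) ℂ := (Sp N)ᵀ

def P0 : Matrix (Fin 2) (Fin 2) ℂ := !![1, 0; 0, 0]
def P1 : Matrix (Fin 2) (Fin 2) ℂ := !![0, 0; 0, 1]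
def Hg : Matrix (Fin 2) (Fin 2) ℂ := ((Real.sqrt 2 : ℝ) : ℂ)⁻¹ • !![1, 1; 1, -1]
def Zg : Matrix (Fin 2) (Fin 2) ℂ := !![1, 0; 0, -1]

/-- `D̃₁ = (1/2)(S₋ − S₊)`, the scaled central finite-difference approximation of `d/dx`. -/
def Dt1 (N : ℕ) [NeZero N] : Matrix (Fin N) (Fin N) ℂ :=
  (1 / 2 : ℂ) • (Sm N - Sp N)

namespace Matrix

variable {ι l m n o α : Type*} [DecidableEq m] [DecidableEq n] [CommRing α]

def controlled (P : Matrix m m α) (V : Matrix n n α) : Matrix (m × n) (m × n) α :=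
  P ⊗ₖ V + (1 - P) ⊗ₖ 1

def selectOn (s : Finset ι) (P : ι → Matrix m m α) (V : ι → Matrix n n α) :
    Matrix (m × n) (m × n) α :=
  ∑ i ∈ s, P i ⊗ₖ V i + (1 - ∑ i ∈ s, P i) ⊗ₖ 1

variable {P : ι → Matrix m m α} {V : ι → Matrix n n α}

@[simp]
theorem selectOn_empty : selectOn ∅ P V = 1 := by
  simp [selectOn]

theorem selectOn_insert [Fintype m] [Fintype n] [DecidableEq ι] {s : Finset ι} {i : ι}
    (hi : i ∉ s) (horth : ∀ j ∈ s, P j * P i = 0) :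
    selectOn (insert i s) P V = selectOn s P V * controlled (P i) (V i) := by
  have hsum : (∑ j ∈ s, P j) * P i = 0 := by
    rw [Finset.sum_mul]; exact Finset.sum_eq_zero horth
  have hXP : (∑ j ∈ s, P j ⊗ₖ V j) * (P i ⊗ₖ V i) = 0 := by
    rw [Finset.sum_mul]
    exact Finset.sum_eq_zero fun j hj => by rw [← mul_kronecker_mul, horth j hj, zero_kronecker]
  have hXQ : (∑ j ∈ s, P j ⊗ₖ V j) * ((1 - P i) ⊗ₖ 1) = ∑ j ∈ s, P j ⊗ₖ V j := by
    rw [Finset.sum_mul]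
    exact Finset.sum_congr rfl fun j hj => by
      rw [← mul_kronecker_mul, mul_sub, horth j hj, mul_one, mul_one, sub_zero]
  have hRP : ((1 - ∑ j ∈ s, P j) ⊗ₖ 1) * (P i ⊗ₖ V i) = P i ⊗ₖ V i := by
    rw [← mul_kronecker_mul, sub_mul, hsum, one_mul, one_mul, sub_zero]
  have hRQ : ((1 - ∑ j ∈ s, P j) ⊗ₖ 1) * ((1 - P i) ⊗ₖ (1 : Matrix n n α))
      = (1 - (P i + ∑ j ∈ s, P j)) ⊗ₖ 1 := by
    rw [← mul_kronecker_mul, mul_sub, mul_one, mul_one, sub_mul, hsum, one_mul, sub_zero,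
      sub_sub, add_comm]
  rw [selectOn, selectOn, controlled, Finset.sum_insert hi, Finset.sum_insert hi, add_mul,
    mul_add, mul_add, hXP, hXQ, hRP, hRQ]
  abel

theorem selectOn_univ [Fintype ι] (h : ∑ i, P i = 1) :
    selectOn Finset.univ P V = ∑ i, P i ⊗ₖ V i := by
  simp [selectOn, h]

theorem selectOn_single_insert [Fintype ι] [DecidableEq ι] [Fintype n] {s : Finset ι} {i : ι}
    (hi : i ∉ s) :
    selectOn (insert i s) (fun j => single j j (1 : α)) V
      = selectOn s (fun j => single j j 1) V * controlled (single i i 1) (V i) :=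
  selectOn_insert hi fun _ hj => single_mul_single_of_ne _ _ _ _ (ne_of_mem_of_not_mem hj hi) _

theorem mul_single_one_mul_apply [Fintype ι] [DecidableEq ι] (A : Matrix l ι α)
    (B : Matrix ι o α) (i : ι) (x : l) (y : o) :
    (A * single i i (1 : α) * B) x y = A x i * B i y := by
  rw [mul_apply, Finset.sum_eq_single i (fun j _ hj => by simp [hj]) (by simp)]
  simp

theorem kronecker_one_mul_sum_single_mul_kronecker_one_apply [Fintype ι] [DecidableEq ι]
    [Fintype n] (A B : Matrix ι ι α) (V : ι → Matrix n n α) (x y : ι) (r c : n) :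
    (A ⊗ₖ (1 : Matrix n n α) * (∑ i, single i i (1 : α) ⊗ₖ V i) * B ⊗ₖ (1 : Matrix n n α))
      (x, r) (y, c) = ∑ i, A x i * B i y * V i r c := by
  simp only [Finset.mul_sum, Finset.sum_mul, ← mul_kronecker_mul, Matrix.one_mul, Matrix.mul_one,
    sum_apply, kronecker_apply, mul_single_one_mul_apply]

end Matrix

theorem P0_eq_single : P0 = single 0 0 1 := by
  ext i j; fin_cases i <;> fin_cases j <;> simp [P0]

theorem P1_eq_single : P1 = single 1 1 1 := by
  ext i j; fin_cases i <;> fin_cases j <;> simp [P1]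

theorem inv_sqrt_two_mul_self : ((Real.sqrt 2 : ℝ) : ℂ)⁻¹ * ((Real.sqrt 2 : ℝ) : ℂ)⁻¹ = 1 / 2 := by
  rw [← mul_inv, ← Complex.ofReal_mul, Real.mul_self_sqrt zero_le_two]
  norm_num

def gradientShift (N : ℕ) [NeZero N] : Fin 2 × Fin 2 → Matrix (Fin N × Fin N) (Fin N × Fin N) ℂ :=
  fun i => ![![1 ⊗ₖ Sm N, 1 ⊗ₖ Sp N], ![Sm N ⊗ₖ 1, Sp N ⊗ₖ 1]] i.2 i.1

theorem controlled_shifts_mul_eq_sum (N : ℕ) [NeZero N] :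
    controlled (P1 ⊗ₖ P1) (Sp N ⊗ₖ 1) * controlled (P0 ⊗ₖ P1) (Sm N ⊗ₖ 1)
      * controlled (P1 ⊗ₖ P0) (1 ⊗ₖ Sp N) * controlled (P0 ⊗ₖ P0) (1 ⊗ₖ Sm N)
      = ∑ i, single i i 1 ⊗ₖ gradientShift N i := by
  have huniv : (Finset.univ : Finset (Fin 2 × Fin 2))
      = insert (0, 0) (insert (1, 0) (insert (0, 1) (insert (1, 1) ∅))) := by decide
  rw [← selectOn_univ (P := fun i => single i i 1) sum_single_one, huniv]
  simp (disch := decide) only [selectOn_single_insert, selectOn_empty, Matrix.one_mul,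
    P0_eq_single, P1_eq_single, single_kronecker_single, mul_one]
  rfl

theorem hadamard_lcu_apply (a : Fin 2) (f : Fin 2 × Fin 2 → ℂ) :
    ∑ i, (Hg ⊗ₖ (1 : Matrix (Fin 2) (Fin 2) ℂ)) (0, a) i * ((Zg * Hg) ⊗ₖ Hg) i (0, 0) * f i
      = ((Real.sqrt 2 : ℝ) : ℂ)⁻¹ * ((f (0, a) - f (1, a)) / 2) := by
  fin_cases a <;>
  · simp [Fintype.sum_prod_type, Fin.sum_univ_two, Hg, Zg, one_apply, inv_sqrt_two_mul_self]
    ring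

theorem stmt_14_general (N : ℕ) [NeZero N]
    (C0 C1 C2 C3 U : Matrix ((Fin 2 × Fin 2) × (Fin N × Fin N)) ((Fin 2 × Fin 2) × (Fin N × Fin N)) ℂ)
    (hC0 : C0 = P0 ⊗ₖ P0 ⊗ₖ ((1 : Matrix (Fin N) (Fin N) ℂ) ⊗ₖ Sm N)
      + ((1 : Matrix (Fin 2 × Fin 2) (Fin 2 × Fin 2) ℂ) - P0 ⊗ₖ P0)
          ⊗ₖ (1 : Matrix (Fin N × Fin N) (Fin N × Fin N) ℂ))
    (hC1 : C1 = P1 ⊗ₖ P0 ⊗ₖ ((1 : Matrix (Fin N) (Fin N) ℂ) ⊗ₖ Sp N)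
      + ((1 : Matrix (Fin 2 × Fin 2) (Fin 2 × Fin 2) ℂ) - P1 ⊗ₖ P0)
          ⊗ₖ (1 : Matrix (Fin N × Fin N) (Fin N × Fin N) ℂ))
    (hC2 : C2 = P0 ⊗ₖ P1 ⊗ₖ (Sm N ⊗ₖ (1 : Matrix (Fin N) (Fin N) ℂ))
      + ((1 : Matrix (Fin 2 × Fin 2) (Fin 2 × Fin 2) ℂ) - P0 ⊗ₖ P1)
          ⊗ₖ (1 : Matrix (Fin N × Fin N) (Fin N × Fin N) ℂ))
    (hC3 : C3 = P1 ⊗ₖ P1 ⊗ₖ (Sp N ⊗ₖ (1 : Matrix (Fin N) (Fin N) ℂ))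
      + ((1 : Matrix (Fin 2 × Fin 2) (Fin 2 × Fin 2) ℂ) - P1 ⊗ₖ P1)
          ⊗ₖ (1 : Matrix (Fin N × Fin N) (Fin N × Fin N) ℂ))
    (hU : U = (Hg ⊗ₖ (1 : Matrix (Fin 2) (Fin 2) ℂ) ⊗ₖ (1 : Matrix (Fin N × Fin N) (Fin N × Fin N) ℂ))
      * C3 * C2 * C1 * C0
      * ((Zg * Hg) ⊗ₖ Hg ⊗ₖ (1 : Matrix (Fin N × Fin N) (Fin N × Fin N) ℂ))) :
    ∀ r c : Fin N × Fin N,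
      U ((0, 0), r) ((0, 0), c)
        = ((Real.sqrt 2 : ℝ) : ℂ)⁻¹ * ((1 : Matrix (Fin N) (Fin N) ℂ) ⊗ₖ Dt1 N) r c ∧
      U ((0, 1), r) ((0, 0), c)
        = ((Real.sqrt 2 : ℝ) : ℂ)⁻¹ * (Dt1 N ⊗ₖ (1 : Matrix (Fin N) (Fin N) ℂ)) r c := by
  intro r c
  have hU' :
      U = Hg ⊗ₖ 1 ⊗ₖ 1 * (∑ i, single i i 1 ⊗ₖ gradientShift N i) * (Zg * Hg) ⊗ₖ Hg ⊗ₖ 1 := by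
    rw [hU, ← controlled_shifts_mul_eq_sum, hC0, hC1, hC2, hC3]
    simp only [controlled, mul_assoc]
  rw [hU', kronecker_one_mul_sum_single_mul_kronecker_one_apply,
    kronecker_one_mul_sum_single_mul_kronecker_one_apply, hadamard_lcu_apply, hadamard_lcu_apply]
  constructor <;> simp [gradientShift, Dt1] <;> ring

theorem stmt_14 (n : ℕ) (hn : 1 ≤ n) (N : ℕ) (hN : N = 2 ^ n) [NeZero N]
    (C0 C1 C2 C3 U : Matrix ((Fin 2 × Fin 2) × (Fin N × Fin N)) ((Fin 2 × Fin 2) × (Fin N × Fin N)) ℂ)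
    (hC0 : C0 = P0 ⊗ₖ P0 ⊗ₖ ((1 : Matrix (Fin N) (Fin N) ℂ) ⊗ₖ Sm N)
      + ((1 : Matrix (Fin 2 × Fin 2) (Fin 2 × Fin 2) ℂ) - P0 ⊗ₖ P0)
          ⊗ₖ (1 : Matrix (Fin N × Fin N) (Fin N × Fin N) ℂ))
    (hC1 : C1 = P1 ⊗ₖ P0 ⊗ₖ ((1 : Matrix (Fin N) (Fin N) ℂ) ⊗ₖ Sp N)
      + ((1 : Matrix (Fin 2 × Fin 2) (Fin 2 × Fin 2) ℂ) - P1 ⊗ₖ P0)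
          ⊗ₖ (1 : Matrix (Fin N × Fin N) (Fin N × Fin N) ℂ))
    (hC2 : C2 = P0 ⊗ₖ P1 ⊗ₖ (Sm N ⊗ₖ (1 : Matrix (Fin N) (Fin N) ℂ))
      + ((1 : Matrix (Fin 2 × Fin 2) (Fin 2 × Fin 2) ℂ) - P0 ⊗ₖ P1)
          ⊗ₖ (1 : Matrix (Fin N × Fin N) (Fin N × Fin N) ℂ))
    (hC3 : C3 = P1 ⊗ₖ P1 ⊗ₖ (Sp N ⊗ₖ (1 : Matrix (Fin N) (Fin N) ℂ))
      + ((1 : Matrix (Fin 2 × Fin 2) (Fin 2 × Fin 2) ℂ) - P1 ⊗ₖ P1)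
          ⊗ₖ (1 : Matrix (Fin N × Fin N) (Fin N × Fin N) ℂ))
    (hU : U = (Hg ⊗ₖ (1 : Matrix (Fin 2) (Fin 2) ℂ) ⊗ₖ (1 : Matrix (Fin N × Fin N) (Fin N × Fin N) ℂ))
      * C3 * C2 * C1 * C0
      * ((Zg * Hg) ⊗ₖ Hg ⊗ₖ (1 : Matrix (Fin N × Fin N) (Fin N × Fin N) ℂ))) :
    ∀ r c : Fin N × Fin N,
      U ((0, 0), r) ((0, 0), c)
        = ((Real.sqrt 2 : ℝ) : ℂ)⁻¹ * ((1 : Matrix (Fin N) (Fin N) ℂ) ⊗ₖ Dt1 N) r c ∧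
      U ((0, 1), r) ((0, 0), c)
        = ((Real.sqrt 2 : ℝ) : ℂ)⁻¹ * (Dt1 N ⊗ₖ (1 : Matrix (Fin N) (Fin N) ℂ)) r c :=
  stmt_14_general N C0 C1 C2 C3 U hC0 hC1 hC2 hC3 hU
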